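/- For odd n, the graph G obtained from the complete graph K_n by deleting a maximum matching (of size (n−1)/2) satisfies sdiam_3(G) = 2, Δ(G) = n − 1, and e(G) = C(n,2) − (n−1)/2; moreover, every graph H of order n with sdiam_3(H) = 2 and Δ(H) = n − 1 has at least C(n,2) − (n−1)/2 edges. -/

import Mathlib

open SimpleGraph

/-- The Steiner distance of a vertex set `S` in a graph `G`: the minimum number of edges
of a connected subgraph of `G` whose vertex set contains `S`. -/
noncomputable def steinerDist {V : Type*} (G : SimpleGraph V) (S : Set V) : ℕ :=
  sInf {m : ℕ | ∃ H : G.Subgraph, H.Connected ∧ S ⊆ H.verts ∧ H.edgeSet.ncard = m}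

/-- The Steiner `k`-diameter of `G`: the maximum Steiner distance over all `k`-element
vertex subsets. -/
noncomputable def sdiam {V : Type*} [Fintype V] (G : SimpleGraph V) (k : ℕ) : ℕ :=
  sSup {m : ℕ | ∃ S : Finset V, S.card = k ∧ steinerDist G ↑S = m}

/-- The maximum degree of `G`. -/
noncomputable def maxDeg {V : Type*} [Fintype V] (G : SimpleGraph V) : ℕ :=
  Finset.univ.sup fun v => (G.neighborSet v).ncard

/-- The minimum degree of `G`. -/
noncomputable def minDeg {V : Type*} [Fintype V] (G : SimpleGraph V) : ℕ :=
  sInf {d : ℕ | ∃ v : V, (G.neighborSet v).ncard = d}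

/-- `e3 n ℓ d` : minimum number of edges of a graph of order `n` with maximum degree `ℓ`
and Steiner 3-diameter at most `d` (`⊤` if no such graph exists). -/
noncomputable def e3 (n ℓ d : ℕ) : ℕ∞ :=
  sInf {m : ℕ∞ | ∃ G : SimpleGraph (Fin n),
    maxDeg G = ℓ ∧ sdiam G 3 ≤ d ∧ (G.edgeSet.ncard : ℕ∞) = m}
/-!
Everything hinges on the condition that every vertex has at most one non-neighbour, i.e. that the
complement has maximum degree at most one. Under it, among any three vertices one is adjacent to
the other two, so they are spanned by a path with two edges and `sdiam₃ = 2`; and the complement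
has at most `⌊n/2⌋ = (n - 1)/2` edges. Conversely, if `H` has a universal vertex (so is
connected) and `sdiam₃ H = 2`, a Steiner tree of three vertices has two edges, hence no further
vertices, so each of the three is adjacent to one of the other two: no vertex has two
non-neighbours. The complement of `Kₙ` minus a matching is the matching itself, and for odd `n`
some vertex is left uncovered, which makes it universal.
-/

namespace SimpleGraph

variable {V : Type*} {G : SimpleGraph V}

lemma Subgraph.Connected.ncard_verts_le_ncard_edgeSet_add_one {T : G.Subgraph}
    (hT : T.Connected) : T.verts.ncard ≤ T.edgeSet.ncard + 1 := by
  have h := hT.coe.card_vert_le_card_edgeSet_add_one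
  rwa [Nat.card_coe_set_eq, Nat.card_coe_set_eq, ← Set.ncard_image_of_injective _
    (Sym2.map.injective Subtype.val_injective), T.image_coe_edgeSet_coe] at h

lemma ncard_edgeSet_add_ncard_edgeSet_compl [Fintype V] (G : SimpleGraph V) :
    G.edgeSet.ncard + Gᶜ.edgeSet.ncard = (Fintype.card V).choose 2 := by
  classical
  rw [← top_sdiff, edgeSet_sdiff, add_comm,
    Set.ncard_sdiff_add_ncard_of_subset (edgeSet_mono le_top), Set.ncard_eq_toFinset_card',
    ← card_edgeFinset_top_eq_card_choose_two]
  rfl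

lemma two_mul_ncard_edgeSet_le_card [Fintype V] (h : ∀ v, (G.neighborSet v).Subsingleton) :
    2 * G.edgeSet.ncard ≤ Fintype.card V := by
  classical
  rw [← coe_edgeFinset, Set.ncard_coe_finset, ← sum_degrees_eq_twice_card_edges]
  calc ∑ v, G.degree v ≤ ∑ _v : V, 1 :=
        Finset.sum_le_sum fun v _ => Finset.card_le_one.mpr fun a ha b hb =>
          h v (by simpa using ha) (by simpa using hb)
    _ = Fintype.card V := by simp

lemma ncard_neighborSet_eq_degree [Fintype V] [DecidableRel G.Adj] (v : V) :
    (G.neighborSet v).ncard = G.degree v :=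
  Set.ncard_eq_toFinset_card' _

lemma maxDeg_eq_maxDegree [Fintype V] [DecidableRel G.Adj] : maxDeg G = G.maxDegree := by
  simp only [maxDeg, ncard_neighborSet_eq_degree]
  exact le_antisymm (Finset.sup_le fun v _ => G.degree_le_maxDegree v)
    (G.maxDegree_le_of_forall_degree_le _ fun v =>
      Finset.le_sup (f := fun v => G.degree v) (Finset.mem_univ v))

lemma IsUniversal.maxDeg_eq [Fintype V] {v : V} (hv : G.IsUniversal v) :
    maxDeg G = Fintype.card V - 1 := by
  classical
  have : Nonempty V := ⟨v⟩
  rw [maxDeg_eq_maxDegree]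
  refine le_antisymm (Nat.le_sub_one_of_lt G.maxDegree_lt_card_verts) ?_
  exact ((G.degree_eq_card_sub_one v).mpr hv).ge.trans (G.degree_le_maxDegree v)

lemma exists_isUniversal_of_maxDeg_eq [Fintype V] [Nonempty V]
    (h : maxDeg G = Fintype.card V - 1) : ∃ v, G.IsUniversal v := by
  classical
  obtain ⟨v, hv⟩ := G.exists_maximal_degree_vertex
  refine ⟨v, (G.degree_eq_card_sub_one v).mp ?_⟩
  rw [← hv, ← maxDeg_eq_maxDegree, h]

lemma Subgraph.IsMatching.exists_notMem_verts [Fintype V] {M : G.Subgraph} (hM : M.IsMatching)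
    (hV : Odd (Fintype.card V)) : ∃ v, v ∉ M.verts := by
  classical
  by_contra! h
  have := hM.even_card
  rw [Set.toFinset_eq_univ.mpr (Set.eq_univ_of_forall h), Finset.card_univ] at this
  exact Nat.not_even_iff_odd.mpr hV this

lemma Subgraph.IsMatching.subsingleton_neighborSet_spanningCoe {M : G.Subgraph}
    (hM : M.IsMatching) (v : V) : (M.spanningCoe.neighborSet v).Subsingleton :=
  fun _ hu _ hw => hM.eq_of_adj_left hu hw

lemma deleteEdges_top_eq_compl_spanningCoe (M : (⊤ : SimpleGraph V).Subgraph) :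
    (⊤ : SimpleGraph V).deleteEdges M.edgeSet = M.spanningCoeᶜ := by
  ext u v
  simp only [deleteEdges_adj, top_adj, compl_adj, Subgraph.spanningCoe_adj, Subgraph.mem_edgeSet]

lemma steinerDist_le_ncard_edgeSet [Finite V] (G : SimpleGraph V) (S : Set V) :
    steinerDist G S ≤ G.edgeSet.ncard := by
  rcases Set.eq_empty_or_nonempty
    {m | ∃ T : G.Subgraph, T.Connected ∧ S ⊆ T.verts ∧ T.edgeSet.ncard = m} with h | h
  · simp [steinerDist, h]
  · obtain ⟨T, -, -, hT⟩ := Nat.sInf_mem h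
    rw [steinerDist, ← hT]
    exact Set.ncard_le_ncard T.edgeSet_subset

lemma steinerDist_le_sdiam [Fintype V] (G : SimpleGraph V) {k : ℕ} {S : Finset V}
    (hS : S.card = k) : steinerDist G S ≤ sdiam G k :=
  le_csSup
    ⟨G.edgeSet.ncard, by rintro _ ⟨S, -, rfl⟩; exact steinerDist_le_ncard_edgeSet G S⟩
    ⟨S, hS, rfl⟩

lemma sdiam_eq_of_forall_steinerDist_eq [Fintype V] {k d : ℕ} (hk : k ≤ Fintype.card V)
    (h : ∀ S : Finset V, S.card = k → steinerDist G S = d) : sdiam G k = d := by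
  obtain ⟨S, -, hS⟩ := Finset.exists_subset_card_eq (s := Finset.univ) (by simpa using hk)
  have : {m | ∃ S : Finset V, S.card = k ∧ steinerDist G S = m} = {d} :=
    Set.eq_singleton_iff_unique_mem.mpr
      ⟨⟨S, hS, h S hS⟩, by rintro _ ⟨S, hS, rfl⟩; exact h S hS⟩
  rw [sdiam, this, csSup_singleton]

lemma Connected.exists_subgraph_steinerDist (hG : G.Connected) (S : Set V) :
    ∃ T : G.Subgraph, T.Connected ∧ S ⊆ T.verts ∧ T.edgeSet.ncard = steinerDist G S := by
  have hne :
      {m | ∃ T : G.Subgraph, T.Connected ∧ S ⊆ T.verts ∧ T.edgeSet.ncard = m}.Nonempty :=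
    ⟨_, ⊤, Subgraph.connected_iff'.mpr (Subgraph.topIso.connected_iff.mpr hG),
      Set.subset_univ S, rfl⟩
  exact Nat.sInf_mem hne

lemma Subgraph.Connected.two_le_ncard_edgeSet [Finite V] {T : G.Subgraph} (hT : T.Connected)
    {a b c : V} (hab : a ≠ b) (hac : a ≠ c) (hbc : b ≠ c) (hS : {a, b, c} ⊆ T.verts) :
    2 ≤ T.edgeSet.ncard := by
  have h3 := Set.ncard_le_ncard hS
  rw [Set.ncard_eq_three.mpr ⟨a, b, c, hab, hac, hbc, rfl⟩] at h3
  have := hT.ncard_verts_le_ncard_edgeSet_add_one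
  omega

lemma steinerDist_eq_two_of_adj_of_adj [Finite V] {a b c : V} (hab : G.Adj a b)
    (hbc : G.Adj b c) (hac : a ≠ c) : steinerDist G {a, b, c} = 2 := by
  let p : G.Walk a c := .cons hab (.cons hbc .nil)
  have hp : p.toSubgraph.edgeSet.ncard = 2 := by
    simpa [p] using Set.ncard_pair (a := s(b, c)) (b := s(a, b)) (by simp [hab.ne', hac.symm])
  have hverts : {a, b, c} ⊆ p.toSubgraph.verts := by
    simp [p, Set.insert_subset_iff]
  have hmem :
      2 ∈ {m | ∃ T : G.Subgraph, T.Connected ∧ {a, b, c} ⊆ T.verts ∧ T.edgeSet.ncard = m} :=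
    ⟨p.toSubgraph, p.toSubgraph_connected, hverts, hp⟩
  refine le_antisymm (Nat.sInf_le hmem) ?_
  obtain ⟨T, hT, hS, hTe⟩ := Nat.sInf_mem ⟨2, hmem⟩
  rw [steinerDist, ← hTe]
  exact hT.two_le_ncard_edgeSet hab.ne hac hbc.ne hS

lemma adj_of_not_adj_of_subsingleton_neighborSet_compl
    (hG : ∀ v, (Gᶜ.neighborSet v).Subsingleton) {u v w : V}
    (huv : u ≠ v) (huw : u ≠ w) (hvw : v ≠ w) (h : ¬G.Adj u v) : G.Adj u w := by
  by_contra h'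
  exact hvw (hG u (show Gᶜ.Adj u v from ⟨huv, h⟩) (show Gᶜ.Adj u w from ⟨huw, h'⟩))

lemma steinerDist_eq_two_of_subsingleton_neighborSet_compl [Finite V]
    (hG : ∀ v, (Gᶜ.neighborSet v).Subsingleton)
    {a b c : V} (hab : a ≠ b) (hac : a ≠ c) (hbc : b ≠ c) : steinerDist G {a, b, c} = 2 := by
  by_cases h₁ : G.Adj a b
  · by_cases h₂ : G.Adj b c
    · exact steinerDist_eq_two_of_adj_of_adj h₁ h₂ hac
    · have hca := adj_of_not_adj_of_subsingleton_neighborSet_compl hG hbc.symm hac.symm hab.symm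
        (fun h => h₂ h.symm)
      rw [Set.insert_comm]
      exact steinerDist_eq_two_of_adj_of_adj h₁.symm hca.symm hbc
  · have hac' := adj_of_not_adj_of_subsingleton_neighborSet_compl hG hab hac hbc h₁
    have hbc' := adj_of_not_adj_of_subsingleton_neighborSet_compl hG hab.symm hbc hac
      (fun h => h₁ h.symm)
    rw [Set.pair_comm]
    exact steinerDist_eq_two_of_adj_of_adj hac' hbc'.symm hab

lemma sdiam_three_eq_two_of_subsingleton_neighborSet_compl [Fintype V] (hV : 3 ≤ Fintype.card V)
    (hG : ∀ v, (Gᶜ.neighborSet v).Subsingleton) : sdiam G 3 = 2 := by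
  classical
  refine sdiam_eq_of_forall_steinerDist_eq hV fun S hS => ?_
  obtain ⟨a, b, c, hab, hac, hbc, rfl⟩ := Finset.card_eq_three.mp hS
  push_cast
  exact steinerDist_eq_two_of_subsingleton_neighborSet_compl hG hab hac hbc

lemma Connected.adj_or_adj_of_steinerDist_le_two [Finite V] (hG : G.Connected) {a b c : V}
    (hab : a ≠ b) (hac : a ≠ c) (hbc : b ≠ c) (h : steinerDist G {a, b, c} ≤ 2) :
    G.Adj a b ∨ G.Adj a c := by
  obtain ⟨T, hT, hS, hTe⟩ := hG.exists_subgraph_steinerDist {a, b, c}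
  have hverts : T.verts = {a, b, c} := by
    refine (Set.eq_of_subset_of_ncard_le hS ?_).symm
    rw [Set.ncard_eq_three.mpr ⟨a, b, c, hab, hac, hbc, rfl⟩]
    have := hT.ncard_verts_le_ncard_edgeSet_add_one
    omega
  have : Nontrivial T.verts :=
    ⟨⟨⟨a, hS (by simp)⟩, ⟨b, hS (by simp)⟩, by simpa using hab⟩⟩
  obtain ⟨u, hu⟩ := hT.preconnected.exists_adj_of_nontrivial ⟨a, hS (by simp)⟩
  have hu' : u ∈ T.verts := T.edge_vert hu.symm
  rw [hverts] at hu'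
  rcases hu' with rfl | rfl | rfl
  · exact (hu.adj_sub.ne rfl).elim
  · exact .inl hu.adj_sub
  · exact .inr hu.adj_sub

lemma Connected.subsingleton_neighborSet_compl_of_sdiam_le_two [Fintype V] (hG : G.Connected)
    (h : sdiam G 3 ≤ 2) (v : V) : (Gᶜ.neighborSet v).Subsingleton := by
  classical
  intro a ha b hb
  by_contra hab
  rw [mem_neighborSet, compl_adj] at ha hb
  have h3 : ({v, a, b} : Finset V).card = 3 :=
    Finset.card_eq_three.mpr ⟨v, a, b, ha.1, hb.1, hab, rfl⟩
  have hle := (steinerDist_le_sdiam G h3).trans h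
  push_cast at hle
  rcases hG.adj_or_adj_of_steinerDist_le_two ha.1 hb.1 hab hle with h | h
  exacts [ha.2 h, hb.2 h]

lemma choose_two_sub_le_ncard_edgeSet [Fintype V] (hV : Odd (Fintype.card V))
    (hG : ∀ v, (Gᶜ.neighborSet v).Subsingleton) :
    (Fintype.card V).choose 2 - (Fintype.card V - 1) / 2 ≤ G.edgeSet.ncard := by
  have := ncard_edgeSet_add_ncard_edgeSet_compl G
  have := two_mul_ncard_edgeSet_le_card hG
  obtain ⟨k, hk⟩ := hV
  omega

end SimpleGraph

theorem stmt11 (n : ℕ) (hodd : Odd n) (hn : 3 ≤ n) {V : Type*} [Fintype V]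
    (hcard : Fintype.card V = n) (M : (⊤ : SimpleGraph V).Subgraph)
    (hM : M.IsMatching) (hMsize : M.edgeSet.ncard = (n - 1) / 2) :
    sdiam ((⊤ : SimpleGraph V).deleteEdges M.edgeSet) 3 = 2 ∧
    maxDeg ((⊤ : SimpleGraph V).deleteEdges M.edgeSet) = n - 1 ∧
    ((⊤ : SimpleGraph V).deleteEdges M.edgeSet).edgeSet.ncard
      = n.choose 2 - (n - 1) / 2 ∧
    ∀ H : SimpleGraph V, sdiam H 3 = 2 → maxDeg H = n - 1 →
      n.choose 2 - (n - 1) / 2 ≤ H.edgeSet.ncard := by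
  subst hcard
  obtain ⟨w, hw⟩ := hM.exists_notMem_verts hodd
  have hsub : ∀ v, ((M.spanningCoeᶜ)ᶜ.neighborSet v).Subsingleton := by
    simpa only [compl_compl] using hM.subsingleton_neighborSet_spanningCoe
  rw [deleteEdges_top_eq_compl_spanningCoe]
  refine ⟨sdiam_three_eq_two_of_subsingleton_neighborSet_compl hn hsub, ?_, ?_,
    fun H hH hdeg => ?_⟩
  · exact IsUniversal.maxDeg_eq
      (isUniversal_compl_iff_isIsolated.mpr fun u h => hw (M.edge_vert h))
  · have := ncard_edgeSet_add_ncard_edgeSet_compl M.spanningCoe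
    rw [Subgraph.edgeSet_spanningCoe, hMsize] at this
    omega
  · have : Nonempty V := ⟨w⟩
    obtain ⟨v, hv⟩ := exists_isUniversal_of_maxDeg_eq hdeg
    exact choose_two_sub_le_ncard_edgeSet hodd
      ((Connected.of_isUniversal hv).subsingleton_neighborSet_compl_of_sdiam_le_two hH.le)
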